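/- arXiv:1304.7493 — 2 statements merged into one kernel-verified Lean document; each statement's English description precedes it below -/
import Mathlib

section
/- Let X be a nonempty metric space that is locally compact, isometrically homogeneous, and admits a dilation of factor λ > 1. Then X is metrically doubling: there exists a constant C ≥ 1 such that for every x ∈ X and every r > 0, the closed ball of center x and radius r can be covered by at most C closed balls of radius r/2. -/
/-- `X` is isometrically homogeneous: for all `p q` there is a surjective
isometry sending `p` to `q`. -/
def IsometricallyHomogeneous (X : Type*) [MetricSpace X] : Prop :=
  ∀ p q : X, ∃ f : X → X, Isometry f ∧ Function.Surjective f ∧ f p = q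

/-- `f` is a dilation of factor `λ` on `X`: a homeomorphism multiplying all
distances by `λ`. -/
def IsDilation {X : Type*} [MetricSpace X] (f : X ≃ₜ X) (lam : ℝ) : Prop :=
  ∀ p q : X, dist (f p) (f q) = lam * dist p q

/-!
Some closed ball `closedBall x₀ R` is compact, hence covered by `N` closed balls of radius
`R / (2 * lam)`. Composing the power `f ^ m` with an isometry gives a surjective map scaling
distances by `lam ^ m` and sending `x₀` to any prescribed point `x`, so it turns this cover into a
cover of `closedBall x (lam ^ m * R)` by `N` balls of radius `lam ^ m * R / (2 * lam)`. Given
`r > 0`, choosing `m` with `r ≤ lam ^ m * R ≤ lam * r` makes these radii at most `r / 2`.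
-/

open Metric Function Set

theorem closedBall_subset_biUnion_of_dist_eq_mul {X Y : Type*} [PseudoMetricSpace X]
    [PseudoMetricSpace Y] {g : X → Y} {s : ℝ} (hs : 0 < s) (hg : Surjective g)
    (hdist : ∀ p q, dist (g p) (g q) = s * dist p q) {x : X} {R ε : ℝ} {T : Finset X}
    (hcov : closedBall x R ⊆ ⋃ c ∈ T, closedBall c ε) :
    closedBall (g x) (s * R) ⊆ ⋃ c ∈ T, closedBall (g c) (s * ε) := by
  intro z hz
  obtain ⟨w, rfl⟩ := hg z
  rw [mem_closedBall, hdist] at hz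
  obtain ⟨c, hc, hwc⟩ := mem_iUnion₂.mp (hcov (le_of_mul_le_mul_left hz hs))
  refine mem_iUnion₂.mpr ⟨c, hc, ?_⟩
  rw [mem_closedBall, hdist]
  exact mul_le_mul_of_nonneg_left hwc hs.le

theorem exists_zpow_mul_mem_Icc {lam R r : ℝ} (hlam : 1 < lam) (hR : 0 < R) (hr : 0 < r) :
    ∃ m : ℤ, r ≤ lam ^ m * R ∧ lam ^ m * R ≤ lam * r := by
  obtain ⟨n, hn, hn'⟩ := exists_mem_Ico_zpow (div_pos hr hR) hlam
  refine ⟨n + 1, ((div_lt_iff₀ hR).mp hn').le, ?_⟩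
  rw [zpow_add_one₀ (by positivity), mul_comm _ lam, mul_assoc]
  exact mul_le_mul_of_nonneg_left ((le_div_iff₀ hR).mp hn) (by positivity)

theorem IsometricallyHomogeneous.exists_surjective_dist_eq_mul_apply_eq {X : Type*}
    [MetricSpace X] (hhom : IsometricallyHomogeneous X) {g : X → X} {s : ℝ} (hg : Surjective g)
    (hdist : ∀ p q, dist (g p) (g q) = s * dist p q) (p q : X) :
    ∃ h : X → X, Surjective h ∧ (∀ a b, dist (h a) (h b) = s * dist a b) ∧ h p = q := by
  obtain ⟨φ, hφ, hφsurj, hφp⟩ := hhom (g p) q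
  exact ⟨φ ∘ g, hφsurj.comp hg, fun a b => by rw [comp_apply, comp_apply, hφ.dist_eq, hdist],
    hφp⟩

namespace IsDilation

variable {X : Type*} [MetricSpace X] {f : X ≃ₜ X} {lam : ℝ}

theorem symm (hf : IsDilation f lam) (hlam : lam ≠ 0) : IsDilation f.symm lam⁻¹ := by
  intro p q
  rw [eq_inv_mul_iff_mul_eq₀ hlam, ← hf, f.apply_symm_apply, f.apply_symm_apply]

theorem dist_iterate (hf : IsDilation f lam) (n : ℕ) (p q : X) :
    dist (f^[n] p) (f^[n] q) = lam ^ n * dist p q := by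
  induction n generalizing p q with
  | zero => simp
  | succ n ih => rw [iterate_succ_apply, iterate_succ_apply, ih, hf, pow_succ, mul_assoc]

theorem exists_surjective_dist_eq_zpow_mul (hf : IsDilation f lam) (hlam : lam ≠ 0) (m : ℤ) :
    ∃ g : X → X, Surjective g ∧ ∀ p q, dist (g p) (g q) = lam ^ m * dist p q := by
  cases m with
  | ofNat n => exact ⟨f^[n], f.surjective.iterate n, by simpa using hf.dist_iterate n⟩
  | negSucc n =>
    refine ⟨f.symm^[n + 1], f.symm.surjective.iterate _, fun p q => ?_⟩
    rw [(hf.symm hlam).dist_iterate, zpow_negSucc, inv_pow]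

end IsDilation

theorem doubling_of_locallyCompact_homogeneous_selfSimilar
    (X : Type*) [MetricSpace X] [Nonempty X] [LocallyCompactSpace X]
    (hhom : IsometricallyHomogeneous X)
    (lam : ℝ) (hlam : 1 < lam) (f : X ≃ₜ X) (hf : IsDilation f lam) :
    ∃ C : ℕ, 1 ≤ C ∧ ∀ (x : X) (r : ℝ), 0 < r →
      ∃ t : Finset X, t.card ≤ C ∧
        Metric.closedBall x r ⊆ ⋃ y ∈ t, Metric.closedBall y (r / 2) := by
  classical
  obtain ⟨x₀⟩ := ‹Nonempty X›
  have hlam₀ : 0 < lam := zero_lt_one.trans hlam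
  obtain ⟨R, hR, hcompact⟩ := exists_isCompact_closedBall x₀
  obtain ⟨T, -, hT⟩ := hcompact.elim_nhds_subcover (fun c => closedBall c (R / (2 * lam)))
    fun c _ => closedBall_mem_nhds c (by positivity)
  refine ⟨max T.card 1, le_max_right _ _, fun x r hr => ?_⟩
  obtain ⟨m, hrm, hmr⟩ := exists_zpow_mul_mem_Icc hlam hR hr
  obtain ⟨g₀, hg₀, hdist₀⟩ := hf.exists_surjective_dist_eq_zpow_mul hlam₀.ne' m
  obtain ⟨g, hg, hdist, rfl⟩ := hhom.exists_surjective_dist_eq_mul_apply_eq hg₀ hdist₀ x₀ x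
  have hradius : lam ^ m * (R / (2 * lam)) ≤ r / 2 := calc
    _ = lam ^ m * R / (2 * lam) := by ring
    _ ≤ lam * r / (2 * lam) := by gcongr
    _ = r / 2 := by field_simp
  refine ⟨T.image g, Finset.card_image_le.trans (le_max_left _ _), ?_⟩
  calc closedBall (g x₀) r ⊆ closedBall (g x₀) (lam ^ m * R) := closedBall_subset_closedBall hrm
    _ ⊆ ⋃ c ∈ T, closedBall (g c) (lam ^ m * (R / (2 * lam))) :=
      closedBall_subset_biUnion_of_dist_eq_mul (by positivity) hg hdist hT
    _ ⊆ ⋃ y ∈ T.image g, closedBall y (r / 2) := by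
      rw [Finset.set_biUnion_finset_image]
      exact iUnion₂_mono fun c _ => closedBall_subset_closedBall hradius
end

section
/- Every locally compact metric space that is isometrically homogeneous is a complete metric space. -/
open Metric Filter

theorem Metric.completeSpace_of_isComplete_closedBall {α : Type*} [PseudoMetricSpace α] {ε : ℝ}
    (hε : 0 < ε) (h : ∀ x : α, IsComplete (closedBall x ε)) : CompleteSpace α := by
  refine ⟨fun {f} hf => ?_⟩
  obtain ⟨t, htf, ht⟩ := (Metric.cauchy_iff.1 hf).2 ε hε
  obtain ⟨x, hx⟩ := hf.1.nonempty_of_mem htf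
  have hball : closedBall x ε ∈ f :=
    mem_of_superset htf fun y hy => mem_closedBall'.2 (ht x hx y hy).le
  obtain ⟨y, -, hy⟩ := h x f hf (le_principal_iff.2 hball)
  exact ⟨y, hy⟩

theorem Isometry.image_closedBall_of_surjective {α β : Type*} [PseudoMetricSpace α]
    [PseudoMetricSpace β] {f : α → β} (hf : Isometry f) (hsurj : Function.Surjective f) (x : α)
    (r : ℝ) : f '' closedBall x r = closedBall (f x) r := by
  rw [← hf.preimage_closedBall, Set.image_preimage_eq _ hsurj]

theorem IsometricallyHomogeneous.isCompact_closedBall {X : Type*} [MetricSpace X]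
    (hhom : IsometricallyHomogeneous X) {p : X} {r : ℝ} (hp : IsCompact (closedBall p r))
    (q : X) : IsCompact (closedBall q r) := by
  obtain ⟨f, hf, hsurj, rfl⟩ := hhom p q
  rw [← hf.image_closedBall_of_surjective hsurj]
  exact hp.image hf.continuous

theorem IsometricallyHomogeneous.exists_pos_forall_isCompact_closedBall {X : Type*} [MetricSpace X]
    [LocallyCompactSpace X] (hhom : IsometricallyHomogeneous X) :
    ∃ r > 0, ∀ q : X, IsCompact (closedBall q r) := by
  rcases isEmpty_or_nonempty X with hX | hX
  · exact ⟨1, one_pos, isEmptyElim⟩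
  obtain ⟨p⟩ := hX
  obtain ⟨r, hr, hp⟩ := exists_isCompact_closedBall p
  exact ⟨r, hr, hhom.isCompact_closedBall hp⟩

theorem completeSpace_of_locallyCompact_homogeneous
    (X : Type*) [MetricSpace X] [LocallyCompactSpace X]
    (hhom : IsometricallyHomogeneous X) :
    CompleteSpace X := by
  obtain ⟨r, hr, hcompact⟩ := hhom.exists_pos_forall_isCompact_closedBall
  exact completeSpace_of_isComplete_closedBall hr fun q => (hcompact q).isComplete
end
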